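/- arXiv:1906.08414 — 3 statements merged into one kernel-verified Lean document; each statement's English description precedes it below -/
import Mathlib

section
/- Every star-algebra homomorphism (ℂ-linear, star-preserving algebra homomorphism) from A₁ to ℂ is equal to one of the following four maps: the zero map, δ₁, δ₂, or δ₃. -/
/- STATEMENT 0: Every star-algebra homomorphism (ℂ-linear, star-preserving algebra
homomorphism) from A₁ to ℂ is equal to one of: the zero map, δ₁, δ₂, or δ₃. -/

open scoped unitInterval
set_option synthInstance.maxHeartbeats 400000
set_option maxHeartbeats 1000000
noncomputable section

abbrev M2 : Type := Matrix (Fin 2) (Fin 2) ℂ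

/-- The ambient C*-algebra `C([0,1], M₂(ℂ)) × ℂ³`. -/
abbrev Amb : Type := C(I, M2) × (ℂ × ℂ × ℂ)

/-- The Elliott–Thomsen algebra
`A₁ = {(f,(a,b,c)) : f 0 = diag (a, c), f 1 = diag (b, c)}`. -/
def A1 : StarSubalgebra ℂ Amb where
  carrier := {x | x.1 0 = Matrix.diagonal ![x.2.1, x.2.2.2] ∧
                  x.1 1 = Matrix.diagonal ![x.2.2.1, x.2.2.2]}
  mul_mem' := by
    rintro x y ⟨hx0, hx1⟩ ⟨hy0, hy1⟩
    constructor
    · show (x.1 * y.1) 0 = _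
      rw [ContinuousMap.mul_apply, hx0, hy0, Matrix.diagonal_mul_diagonal]
      congr 1; funext i; fin_cases i <;> rfl
    · show (x.1 * y.1) 1 = _
      rw [ContinuousMap.mul_apply, hx1, hy1, Matrix.diagonal_mul_diagonal]
      congr 1; funext i; fin_cases i <;> rfl
  add_mem' := by
    rintro x y ⟨hx0, hx1⟩ ⟨hy0, hy1⟩
    constructor
    · show (x.1 + y.1) 0 = _
      rw [ContinuousMap.add_apply, hx0, hy0, Matrix.diagonal_add]
      congr 1; funext i; fin_cases i <;> rfl
    · show (x.1 + y.1) 1 = _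
      rw [ContinuousMap.add_apply, hx1, hy1, Matrix.diagonal_add]
      congr 1; funext i; fin_cases i <;> rfl
  algebraMap_mem' := by
    intro r
    constructor <;>
    · show algebraMap ℂ M2 r = _
      ext i j
      fin_cases i <;> fin_cases j <;>
        simp [Matrix.algebraMap_matrix_apply, Matrix.diagonal]
  star_mem' := by
    rintro x ⟨hx0, hx1⟩
    constructor
    · show star (x.1 0) = _
      rw [hx0, Matrix.star_eq_conjTranspose, Matrix.diagonal_conjTranspose]
      congr 1; funext i; fin_cases i <;> rfl
    · show star (x.1 1) = _
      rw [hx1, Matrix.star_eq_conjTranspose, Matrix.diagonal_conjTranspose]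
      congr 1; funext i; fin_cases i <;> rfl

/-- `δ₁ (f,(a,b,c)) = a`. -/
def δ₁ : A1 →⋆ₙₐ[ℂ] ℂ where
  toFun x := x.1.2.1
  map_smul' _ _ := rfl
  map_zero' := rfl
  map_add' _ _ := rfl
  map_mul' _ _ := rfl
  map_star' _ := rfl

/-- `δ₂ (f,(a,b,c)) = b`. -/
def δ₂ : A1 →⋆ₙₐ[ℂ] ℂ where
  toFun x := x.1.2.2.1
  map_smul' _ _ := rfl
  map_zero' := rfl
  map_add' _ _ := rfl
  map_mul' _ _ := rfl
  map_star' _ := rfl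

/-- `δ₃ (f,(a,b,c)) = c`. -/
def δ₃ : A1 →⋆ₙₐ[ℂ] ℂ where
  toFun x := x.1.2.2.2
  map_smul' _ _ := rfl
  map_zero' := rfl
  map_add' _ _ := rfl
  map_mul' _ _ := rfl
  map_star' _ := rfl

namespace A1Proof

open Matrix

/-- `t ↦ Matrix.single i j (g t)` as a continuous map. -/
def cmE (i j : Fin 2) (g : C(I, ℂ)) : C(I, M2) :=
  ⟨fun t => g t • Matrix.single i j (1 : ℂ),
    (map_continuous g).smul continuous_const⟩

lemma cmE_apply (i j : Fin 2) (g : C(I, ℂ)) (t : I) :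
    cmE i j g t = Matrix.single i j (g t) := by
  show g t • Matrix.single i j (1 : ℂ) = _
  rw [Matrix.smul_single, smul_eq_mul, mul_one]

lemma cmE_mul_same (i j l : Fin 2) (g h : C(I, ℂ)) :
    cmE i j g * cmE j l h = cmE i l (g * h) := by
  refine ContinuousMap.ext fun t => ?_
  rw [ContinuousMap.mul_apply, cmE_apply, cmE_apply, cmE_apply,
    ContinuousMap.mul_apply]
  exact Matrix.single_mul_single_same _ _ _ _ _

lemma cmE_mul_ne {j k : Fin 2} (hjk : j ≠ k) (i l : Fin 2) (g h : C(I, ℂ)) :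
    cmE i j g * cmE k l h = 0 := by
  refine ContinuousMap.ext fun t => ?_
  rw [ContinuousMap.mul_apply, cmE_apply, cmE_apply, ContinuousMap.zero_apply]
  exact Matrix.single_mul_single_of_ne _ _ _ _ hjk _

lemma cmE_add (i j : Fin 2) (g h : C(I, ℂ)) :
    cmE i j (g + h) = cmE i j g + cmE i j h :=
  ContinuousMap.ext fun t => add_smul (g t) (h t) _

lemma cmE_smul (i j : Fin 2) (z : ℂ) (g : C(I, ℂ)) :
    cmE i j (z • g) = z • cmE i j g :=
  ContinuousMap.ext fun t => (smul_smul z (g t) _).symm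

lemma std00 (z : ℂ) : Matrix.single (0 : Fin 2) 0 z = Matrix.diagonal ![z, 0] := by
  ext i j; fin_cases i <;> fin_cases j <;> simp [Matrix.single, Matrix.diagonal]

lemma std11 (z : ℂ) : Matrix.single (1 : Fin 2) 1 z = Matrix.diagonal ![0, z] := by
  ext i j; fin_cases i <;> fin_cases j <;> simp [Matrix.single, Matrix.diagonal]

lemma diag0 : Matrix.diagonal ![(0:ℂ), 0] = (0 : M2) := by
  ext i j; fin_cases i <;> fin_cases j <;> simp [Matrix.diagonal]

/-- `D g = (g·E₀₀, (g 0, g 1, 0))`. -/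
def el00 (g : C(I, ℂ)) : A1 :=
  ⟨(cmE 0 0 g, (g 0, g 1, 0)),
    ⟨by rw [cmE_apply, std00], by rw [cmE_apply, std00]⟩⟩

/-- `(g·E₁₁, (0,0,g 0))` for `g 0 = g 1`. -/
def el11 (g : C(I, ℂ)) (hg : g 0 = g 1) : A1 :=
  ⟨(cmE 1 1 g, (0, 0, g 0)),
    ⟨by rw [cmE_apply, std11], by rw [cmE_apply, std11, hg]⟩⟩

/-- `(g·E₀₁, 0)` for `g` vanishing at the endpoints. -/
def el01 (g : C(I, ℂ)) (h0 : g 0 = 0) (h1 : g 1 = 0) : A1 :=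
  ⟨(cmE 0 1 g, (0, 0, 0)),
    ⟨by rw [cmE_apply, h0, Matrix.single_zero, diag0],
     by rw [cmE_apply, h1, Matrix.single_zero, diag0]⟩⟩

/-- `(g·E₁₀, 0)` for `g` vanishing at the endpoints. -/
def el10 (g : C(I, ℂ)) (h0 : g 0 = 0) (h1 : g 1 = 0) : A1 :=
  ⟨(cmE 1 0 g, (0, 0, 0)),
    ⟨by rw [cmE_apply, h0, Matrix.single_zero, diag0],
     by rw [cmE_apply, h1, Matrix.single_zero, diag0]⟩⟩

def e₁ : A1 := el00 1
def e₂ : A1 := el11 1 rfl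

lemma el11_congr {g h : C(I, ℂ)} (e : g = h) (hg : g 0 = g 1) (hh : h 0 = h 1) :
    el11 g hg = el11 h hh := by subst e; rfl

-- tuple computations
lemma tup1 (g h : C(I, ℂ)) :
    ((g 0, g 1, (0:ℂ)) * (h 0, h 1, (0:ℂ)) : ℂ × ℂ × ℂ) = ((g*h) 0, (g*h) 1, (0:ℂ)) := by
  simp [Prod.mk_mul_mk]

lemma tup2 (g h : C(I, ℂ)) :
    (((0:ℂ), (0:ℂ), g 0) * ((0:ℂ), (0:ℂ), h 0) : ℂ × ℂ × ℂ) = ((0:ℂ), (0:ℂ), (g*h) 0) := by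
  simp [Prod.mk_mul_mk]

lemma tup3 (g h : C(I, ℂ)) :
    ((g 0, g 1, (0:ℂ)) * ((0:ℂ), (0:ℂ), h 0) : ℂ × ℂ × ℂ) = ((0:ℂ), (0:ℂ), (0:ℂ)) := by
  simp [Prod.mk_mul_mk]

lemma tup4 (g h : C(I, ℂ)) (hg0 : g 0 = 0) (hg1 : g 1 = 0) :
    (((0:ℂ), (0:ℂ), (0:ℂ)) * ((0:ℂ), (0:ℂ), (0:ℂ)) : ℂ × ℂ × ℂ)
      = ((g*h) 0, (g*h) 1, (0:ℂ)) := by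
  simp [Prod.mk_mul_mk, hg0, hg1]

lemma tup5 (g h : C(I, ℂ)) (hg0 : g 0 = 0) :
    (((0:ℂ), (0:ℂ), (0:ℂ)) * ((0:ℂ), (0:ℂ), (0:ℂ)) : ℂ × ℂ × ℂ)
      = ((0:ℂ), (0:ℂ), (g*h) 0) := by
  simp [Prod.mk_mul_mk, hg0]

lemma el00_mul (g h : C(I, ℂ)) : el00 g * el00 h = el00 (g * h) :=
  Subtype.ext (Prod.ext (cmE_mul_same 0 0 0 g h) (tup1 g h))

lemma el11_mul (g h : C(I, ℂ)) (hg : g 0 = g 1) (hh : h 0 = h 1) :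
    el11 g hg * el11 h hh = el11 (g * h)
      (by rw [ContinuousMap.mul_apply, ContinuousMap.mul_apply, hg, hh]) :=
  Subtype.ext (Prod.ext (cmE_mul_same 1 1 1 g h) (tup2 g h))

lemma el00_mul_el11 (g h : C(I, ℂ)) (hh : h 0 = h 1) : el00 g * el11 h hh = 0 :=
  Subtype.ext (Prod.ext (cmE_mul_ne (by decide) 0 1 g h) (tup3 g h))

lemma el01_mul_el10 (g h : C(I, ℂ)) (g0 : g 0 = 0) (g1 : g 1 = 0)
    (h0 : h 0 = 0) (h1 : h 1 = 0) :
    el01 g g0 g1 * el10 h h0 h1 = el00 (g * h) :=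
  Subtype.ext (Prod.ext (cmE_mul_same 0 1 0 g h) (tup4 g h g0 g1))

lemma el10_mul_el01 (g h : C(I, ℂ)) (g0 : g 0 = 0) (g1 : g 1 = 0)
    (h0 : h 0 = 0) (h1 : h 1 = 0) :
    el10 g g0 g1 * el01 h h0 h1 = el11 (g * h)
      (by rw [ContinuousMap.mul_apply, ContinuousMap.mul_apply, g0, g1,
        zero_mul, zero_mul]) :=
  Subtype.ext (Prod.ext (cmE_mul_same 1 0 1 g h) (tup5 g h g0))

lemma e₁_mul_e₂ : e₁ * e₂ = 0 := el00_mul_el11 1 1 rfl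

lemma e₁_mul_el00 (g : C(I, ℂ)) : e₁ * el00 g = el00 g := by
  rw [e₁, el00_mul]
  exact congrArg el00 (one_mul g)

lemma e₂_mul_el11 (g : C(I, ℂ)) (hg : g 0 = g 1) : e₂ * el11 g hg = el11 g hg := by
  exact (el11_mul 1 g rfl hg).trans (el11_congr (one_mul g) _ _)

lemma e₁_mul_e₁ : e₁ * e₁ = e₁ := e₁_mul_el00 1

lemma e₂_mul_e₂ : e₂ * e₂ = e₂ := e₂_mul_el11 1 rfl

lemma cm_sum : cmE 0 0 1 + cmE 1 1 1 = (1 : C(I, M2)) := by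
  refine ContinuousMap.ext fun t => ?_
  rw [ContinuousMap.add_apply, cmE_apply, cmE_apply, ContinuousMap.one_apply,
    ContinuousMap.one_apply]
  ext i j
  fin_cases i <;> fin_cases j <;>
    simp [Matrix.single, Matrix.one_apply]

lemma tup_sum : (((1:C(I,ℂ)) 0, (1:C(I,ℂ)) 1, (0:ℂ)) + ((0:ℂ), (0:ℂ), (1:C(I,ℂ)) 0) : ℂ × ℂ × ℂ)
    = ((1:ℂ), (1:ℂ), (1:ℂ)) := by
  simp [Prod.mk_add_mk]

lemma e₁_add_e₂ : e₁ + e₂ = 1 := Subtype.ext (Prod.ext cm_sum tup_sum)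

/-- Key lemma: if `φ e₂ = 0` then `φ` kills `el00 g` for `g` vanishing at endpoints. -/
lemma K1 (φ : A1 →⋆ₙₐ[ℂ] ℂ) (h2 : φ e₂ = 0) (g : C(I, ℂ)) (g0 : g 0 = 0) (g1 : g 1 = 0) :
    φ (el00 g) = 0 := by
  have hyy : el00 g * el00 g = el01 g g0 g1 * el10 g g0 g1 := by
    rw [el00_mul, el01_mul_el10]
  have hvu : e₂ * (el10 g g0 g1 * el01 g g0 g1) = el10 g g0 g1 * el01 g g0 g1 := by
    rw [el10_mul_el01, e₂_mul_el11]
  have key : φ (el00 g) * φ (el00 g) = 0 := by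
    rw [← _root_.map_mul, hyy, _root_.map_mul, mul_comm, ← _root_.map_mul, ← hvu,
      _root_.map_mul, h2, zero_mul]
  exact mul_self_eq_zero.mp key

/-- Key lemma: if `φ e₁ = 0` then `φ` kills `el11 g _` for `g` vanishing at endpoints. -/
lemma K2 (φ : A1 →⋆ₙₐ[ℂ] ℂ) (h1 : φ e₁ = 0) (g : C(I, ℂ)) (g0 : g 0 = 0) (g1 : g 1 = 0) :
    φ (el11 g (g0.trans g1.symm)) = 0 := by
  have hyy : el11 g (g0.trans g1.symm) * el11 g (g0.trans g1.symm)
      = el10 g g0 g1 * el01 g g0 g1 := by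
    rw [el11_mul, el10_mul_el01]
  have hvu : e₁ * (el01 g g0 g1 * el10 g g0 g1) = el01 g g0 g1 * el10 g g0 g1 := by
    rw [el01_mul_el10, e₁_mul_el00]
  have key : φ (el11 g (g0.trans g1.symm)) * φ (el11 g (g0.trans g1.symm)) = 0 := by
    rw [← _root_.map_mul, hyy, _root_.map_mul, mul_comm, ← _root_.map_mul, ← hvu,
      _root_.map_mul, h1, zero_mul]
  exact mul_self_eq_zero.mp key

lemma corner00 (M : M2) :
    Matrix.single (0 : Fin 2) 0 (1 : ℂ) * M * Matrix.single 0 0 1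
      = Matrix.single 0 0 (M 0 0) := by
  ext a b
  fin_cases a <;> fin_cases b <;>
    simp [Matrix.mul_apply, Matrix.single, Fin.sum_univ_two]

lemma corner11 (M : M2) :
    Matrix.single (1 : Fin 2) 1 (1 : ℂ) * M * Matrix.single 1 1 1
      = Matrix.single 1 1 (M 1 1) := by
  ext a b
  fin_cases a <;> fin_cases b <;>
    simp [Matrix.mul_apply, Matrix.single, Fin.sum_univ_two]

/-- The (i,j) entry function of an element of `A1`. -/
def ent (x : A1) (i j : Fin 2) : C(I, ℂ) :=
  ⟨fun t => (x : Amb).1 t i j, (map_continuous (x : Amb).1).matrix_elem i j⟩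

lemma x_mem0 (x : A1) : (x : Amb).1 0 = Matrix.diagonal ![(x : Amb).2.1, (x : Amb).2.2.2] :=
  x.2.1

lemma x_mem1 (x : A1) : (x : Amb).1 1 = Matrix.diagonal ![(x : Amb).2.2.1, (x : Amb).2.2.2] :=
  x.2.2

lemma ent00_at0 (x : A1) : ent x 0 0 0 = (x : Amb).2.1 := by
  show (x : Amb).1 0 0 0 = _
  rw [x_mem0]; simp

lemma ent00_at1 (x : A1) : ent x 0 0 1 = (x : Amb).2.2.1 := by
  show (x : Amb).1 1 0 0 = _
  rw [x_mem1]; simp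

lemma ent11_at0 (x : A1) : ent x 1 1 0 = (x : Amb).2.2.2 := by
  show (x : Amb).1 0 1 1 = _
  rw [x_mem0]; simp

lemma ent11_at1 (x : A1) : ent x 1 1 1 = (x : Amb).2.2.2 := by
  show (x : Amb).1 1 1 1 = _
  rw [x_mem1]; simp

lemma cm_corner00 (x : A1) :
    cmE 0 0 1 * (x : Amb).1 * cmE 0 0 1 = cmE 0 0 (ent x 0 0) := by
  refine ContinuousMap.ext fun t => ?_
  rw [ContinuousMap.mul_apply, ContinuousMap.mul_apply, cmE_apply, cmE_apply,
    ContinuousMap.one_apply]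
  exact corner00 ((x : Amb).1 t)

lemma cm_corner11 (x : A1) :
    cmE 1 1 1 * (x : Amb).1 * cmE 1 1 1 = cmE 1 1 (ent x 1 1) := by
  refine ContinuousMap.ext fun t => ?_
  rw [ContinuousMap.mul_apply, ContinuousMap.mul_apply, cmE_apply, cmE_apply,
    ContinuousMap.one_apply]
  exact corner11 ((x : Amb).1 t)

lemma tup_corner00 (x : A1) :
    (((1:C(I,ℂ)) 0, (1:C(I,ℂ)) 1, (0:ℂ)) * (x : Amb).2 * ((1:C(I,ℂ)) 0, (1:C(I,ℂ)) 1, (0:ℂ)) : ℂ × ℂ × ℂ)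
      = (ent x 0 0 0, ent x 0 0 1, (0:ℂ)) := by
  rw [ent00_at0, ent00_at1]
  obtain ⟨a, b, c⟩ := (x : Amb).2
  simp [Prod.mk_mul_mk]

lemma tup_corner11 (x : A1) :
    (((0:ℂ), (0:ℂ), (1:C(I,ℂ)) 0) * (x : Amb).2 * ((0:ℂ), (0:ℂ), (1:C(I,ℂ)) 0) : ℂ × ℂ × ℂ)
      = ((0:ℂ), (0:ℂ), ent x 1 1 0) := by
  rw [ent11_at0]
  obtain ⟨a, b, c⟩ := (x : Amb).2
  simp [Prod.mk_mul_mk]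

lemma e₁_x_e₁ (x : A1) : e₁ * x * e₁ = el00 (ent x 0 0) :=
  Subtype.ext (Prod.ext (cm_corner00 x) (tup_corner00 x))

lemma e₂_x_e₂ (x : A1) :
    e₂ * x * e₂ = el11 (ent x 1 1) ((ent11_at0 x).trans (ent11_at1 x).symm) :=
  Subtype.ext (Prod.ext (cm_corner11 x) (tup_corner11 x))

lemma tup_add (g h : C(I, ℂ)) :
    ((g 0, g 1, (0:ℂ)) + (h 0, h 1, (0:ℂ)) : ℂ × ℂ × ℂ) = ((g+h) 0, (g+h) 1, (0:ℂ)) := by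
  simp [Prod.mk_add_mk]

lemma el00_add (g h : C(I, ℂ)) : el00 (g + h) = el00 g + el00 h :=
  Subtype.ext (Prod.ext (cmE_add 0 0 g h) (tup_add g h).symm)

lemma tup_smul (z : ℂ) (g : C(I, ℂ)) :
    (z • (g 0, g 1, (0:ℂ)) : ℂ × ℂ × ℂ) = ((z • g) 0, (z • g) 1, (0:ℂ)) := by
  simp [Prod.smul_mk]

lemma el00_smul (z : ℂ) (g : C(I, ℂ)) : el00 (z • g) = z • el00 g :=
  Subtype.ext (Prod.ext (cmE_smul 0 0 z g) (tup_smul z g).symm)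

lemma fun_decomp (g : C(I, ℂ)) :
    g = g 0 • (1 : C(I, ℂ)) + (g - ContinuousMap.const I (g 0)) := by
  ext t
  simp

lemma cm_decomp (g : C(I, ℂ)) :
    cmE 1 1 g = g 0 • cmE 1 1 1 + cmE 1 1 (g - ContinuousMap.const I (g 0)) := by
  rw [← cmE_smul, ← cmE_add]
  exact congrArg (cmE 1 1) (fun_decomp g)

lemma tup_decomp (g : C(I, ℂ)) (hg : g 0 = g 1) :
    ((0:ℂ), (0:ℂ), g 0)
      = g 0 • ((0:ℂ), (0:ℂ), (1:C(I,ℂ)) 0) + ((0:ℂ), (0:ℂ), (g - ContinuousMap.const I (g 0)) 0) := by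
  simp [Prod.smul_mk, Prod.mk_add_mk]

lemma el11_decomp (g : C(I, ℂ)) (hg : g 0 = g 1) :
    el11 g hg = g 0 • e₂
      + el11 (g - ContinuousMap.const I (g 0))
          (by simp [ContinuousMap.sub_apply, hg]) :=
  Subtype.ext (Prod.ext (cm_decomp g) (tup_decomp g hg))

/-- the inclusion `t ↦ t` as element of `C(I,ℂ)`. -/
def idc : C(I, ℂ) :=
  ⟨fun t => ((t : ℝ) : ℂ), Complex.continuous_ofReal.comp continuous_subtype_val⟩

lemma idc_at0 : idc 0 = 0 := by
  show (((0 : I) : ℝ) : ℂ) = 0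
  norm_num

lemma idc_at1 : idc 1 = 1 := by
  show (((1 : I) : ℝ) : ℂ) = 1
  norm_num

end A1Proof

namespace A1Proof

theorem main (φ : A1 →⋆ₙₐ[ℂ] ℂ) : φ = 0 ∨ φ = δ₁ ∨ φ = δ₂ ∨ φ = δ₃ := by
  set c1 := φ e₁ with hc1def
  set c2 := φ e₂ with hc2def
  have h11 : c1 * c1 = c1 := by rw [hc1def, ← _root_.map_mul, e₁_mul_e₁]
  have h22 : c2 * c2 = c2 := by rw [hc2def, ← _root_.map_mul, e₂_mul_e₂]
  have h12 : c1 * c2 = 0 := by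
    rw [hc1def, hc2def, ← _root_.map_mul, e₁_mul_e₂, map_zero]
  have hone : φ 1 = c1 + c2 := by rw [← e₁_add_e₂, map_add]
  have hc1cases : c1 = 0 ∨ c1 = 1 := by
    rcases mul_eq_zero.mp (show c1 * (c1 - 1) = 0 by linear_combination h11) with h | h
    · exact Or.inl h
    · exact Or.inr (by linear_combination h)
  rcases hc1cases with hc1 | hc1
  · have hc2cases : c2 = 0 ∨ c2 = 1 := by
      rcases mul_eq_zero.mp (show c2 * (c2 - 1) = 0 by linear_combination h22) with h | h
      · exact Or.inl h
      · exact Or.inr (by linear_combination h)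
    rcases hc2cases with hc2 | hc2
    · -- φ = 0
      left
      have h1 : φ 1 = 0 := by rw [hone, hc1, hc2, add_zero]
      ext x
      calc φ x = φ (1 * x) := by rw [one_mul]
        _ = φ 1 * φ x := _root_.map_mul φ 1 x
        _ = 0 := by rw [h1, zero_mul]
    · -- φ = δ₃
      right; right; right
      ext x
      have key : φ (e₂ * x * e₂) = c2 * φ x * c2 := by
        rw [_root_.map_mul, _root_.map_mul, hc2def]
      rw [hc2, one_mul, mul_one] at key
      have hw0 : (ent x 1 1 - ContinuousMap.const I (ent x 1 1 0)) 0 = 0 := by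
        simp [ContinuousMap.sub_apply]
      have hw1 : (ent x 1 1 - ContinuousMap.const I (ent x 1 1 0)) 1 = 0 := by
        simp [ContinuousMap.sub_apply, ent11_at0, ent11_at1]
      calc φ x = φ (e₂ * x * e₂) := key.symm
        _ = φ (el11 (ent x 1 1) ((ent11_at0 x).trans (ent11_at1 x).symm)) := by
            rw [e₂_x_e₂]
        _ = φ ((ent x 1 1 0) • e₂ + el11 _ (hw0.trans hw1.symm)) := by
            rw [el11_decomp]
        _ = (ent x 1 1 0) * c2 + 0 := by
            rw [map_add, map_smul, smul_eq_mul, K2 φ (hc1def ▸ hc1) _ hw0 hw1, hc2def]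
        _ = (x : Amb).2.2.2 := by rw [hc2, mul_one, add_zero, ent11_at0]
        _ = δ₃ x := rfl
  · -- c1 = 1, so c2 = 0
    have hc2 : c2 = 0 := by
      have h := h12; rw [hc1, one_mul] at h; exact h
    have corner : ∀ x : A1, φ x = φ (el00 (ent x 0 0)) := by
      intro x
      have key : φ (e₁ * x * e₁) = c1 * φ x * c1 := by
        rw [_root_.map_mul, _root_.map_mul, hc1def]
      rw [hc1, one_mul, mul_one] at key
      rw [← key, e₁_x_e₁]
    set lam : C(I, ℂ) := 1 - idc with hlam
    have lam0 : lam 0 = 1 := by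
      rw [hlam]; simp [ContinuousMap.sub_apply, idc_at0]
    have lam1 : lam 1 = 0 := by
      rw [hlam]; simp [ContinuousMap.sub_apply, idc_at1]
    set β := φ (el00 idc) with hβdef
    have hlamsum : el00 lam + el00 idc = e₁ := by
      rw [← el00_add, hlam, sub_add_cancel]; rfl
    have hφlam : φ (el00 lam) = 1 - β := by
      have h := congrArg φ hlamsum
      rw [map_add, ← hβdef, ← hc1def, hc1] at h
      linear_combination h
    have hβmul : β * (1 - β) = 0 := by
      rw [hβdef, ← hφlam, ← _root_.map_mul, el00_mul]
      refine K1 φ (hc2def ▸ hc2) _ ?_ ?_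
      · rw [ContinuousMap.mul_apply, idc_at0, zero_mul]
      · rw [ContinuousMap.mul_apply, lam1, mul_zero]
    have hval : ∀ g : C(I, ℂ), φ (el00 g) = g 0 * (1 - β) + g 1 * β := by
      intro g
      have hdecomp : g = g 0 • lam + g 1 • idc + (g - g 0 • lam - g 1 • idc) := by
        abel
      have hw0 : (g - g 0 • lam - g 1 • idc) 0 = 0 := by
        simp [ContinuousMap.sub_apply, ContinuousMap.smul_apply, lam0, idc_at0]
      have hw1 : (g - g 0 • lam - g 1 • idc) 1 = 0 := by
        simp [ContinuousMap.sub_apply, ContinuousMap.smul_apply, lam1, idc_at1]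
      calc φ (el00 g)
          = φ (el00 (g 0 • lam + g 1 • idc + (g - g 0 • lam - g 1 • idc))) := by
            rw [← hdecomp]
        _ = g 0 * φ (el00 lam) + g 1 * φ (el00 idc)
              + φ (el00 (g - g 0 • lam - g 1 • idc)) := by
            rw [el00_add, el00_add, el00_smul, el00_smul, map_add, map_add,
              map_smul, map_smul, smul_eq_mul, smul_eq_mul]
        _ = g 0 * (1 - β) + g 1 * β := by
            rw [hφlam, ← hβdef, K1 φ (hc2def ▸ hc2) _ hw0 hw1, add_zero]
    rcases mul_eq_zero.mp hβmul with hβ | hβ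
    · -- φ = δ₁
      right; left
      ext x
      rw [corner x, hval, hβ, ent00_at0, ent00_at1]
      show (x : Amb).2.1 * (1 - 0) + (x : Amb).2.2.1 * 0 = δ₁ x
      show _ = (x : Amb).2.1
      ring
    · -- φ = δ₂
      right; right; left
      have hβ1 : β = 1 := by linear_combination -hβ
      ext x
      rw [corner x, hval, hβ1, ent00_at0, ent00_at1]
      show (x : Amb).2.1 * (1 - 1) + (x : Amb).2.2.1 * 1 = δ₂ x
      show _ = (x : Amb).2.2.1
      ring

end A1Proof

/-- Every ℂ-linear star-preserving algebra homomorphism from `A₁` to `ℂ` is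
`0`, `δ₁`, `δ₂` or `δ₃`. -/
theorem every_hom_to_C_is_zero_or_delta (φ : A1 →⋆ₙₐ[ℂ] ℂ) :
    φ = 0 ∨ φ = δ₁ ∨ φ = δ₂ ∨ φ = δ₃ :=
  A1Proof.main φ
end
end

section
/- The *-homomorphisms δ₁ and δ₂ are not homotopic: there is no *-homomorphism H : A₁ → C([0,1], ℂ) such that H(g)(0) = δ₁(g) and H(g)(1) = δ₂(g) for all g ∈ A₁. -/
/- STATEMENT 1: The *-homomorphisms δ₁ and δ₂ are not homotopic. -/

open scoped unitInterval
set_option synthInstance.maxHeartbeats 400000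
set_option maxHeartbeats 1000000
noncomputable section

/-- Two *-homomorphisms `φ ψ : A → B` are homotopic if there is a *-homomorphism
`H : A → C([0,1], B)` with `H x 0 = φ x` and `H x 1 = ψ x` for all `x`. -/
def Homotopic {A B : Type*} [NonUnitalNonAssocSemiring A] [Module ℂ A] [Star A]
    [NonUnitalNonAssocSemiring B] [Module ℂ B] [Star B] [TopologicalSpace B]
    [IsTopologicalSemiring B] [ContinuousStar B] [ContinuousConstSMul ℂ B]
    (φ ψ : A →⋆ₙₐ[ℂ] B) : Prop :=
  ∃ H : A →⋆ₙₐ[ℂ] C(I, B), ∀ x, (H x) 0 = φ x ∧ (H x) 1 = ψ x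

def sq' (t : I) : ℝ := Real.sqrt ((t:ℝ) * (1 - (t:ℝ)) * (2 - (t:ℝ)))

lemma sq'_nonneg (t : I) : 0 ≤ (t:ℝ) * (1 - (t:ℝ)) * (2 - (t:ℝ)) := by
  have h1 := t.2.1; have h2 := t.2.2
  have : 0 ≤ (t:ℝ) * (1 - (t:ℝ)) := mul_nonneg h1 (by linarith)
  nlinarith

lemma sq'_sq (t : I) : (sq' t)^2 = (t:ℝ) * (1 - (t:ℝ)) * (2 - (t:ℝ)) := Real.sq_sqrt (sq'_nonneg t)

lemma sq'_zero : sq' 0 = 0 := by simp [sq']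
lemma sq'_one : sq' 1 = 0 := by simp [sq']

def uf : C(I, M2) := ⟨fun t => !![0, (sq' t : ℂ); 0, 0], by
  apply continuous_matrix
  intro i j
  fin_cases i <;> fin_cases j <;> simp <;> fun_prop [sq']⟩

def vf : C(I, M2) := ⟨fun t => Matrix.diagonal ![((t:ℝ):ℂ) - 2, 0], by
  apply continuous_matrix
  intro i j
  fin_cases i <;> fin_cases j <;> simp [Matrix.diagonal] <;> fun_prop⟩

def uA : A1 := ⟨(uf, (0,0,0)), by
  refine ⟨?_, ?_⟩
  · show uf 0 = _
    ext i j
    fin_cases i <;> fin_cases j <;> simp [uf, sq'_zero, Matrix.diagonal]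
  · show uf 1 = _
    ext i j
    fin_cases i <;> fin_cases j <;> simp [uf, sq'_one, Matrix.diagonal]⟩

def vA : A1 := ⟨(vf, (-2,-1,0)), by
  refine ⟨?_, ?_⟩
  · show vf 0 = _
    ext i j
    fin_cases i <;> fin_cases j <;> simp [vf, Matrix.diagonal] <;> norm_num
  · show vf 1 = _
    ext i j
    fin_cases i <;> fin_cases j <;> simp [vf, Matrix.diagonal] <;> norm_num⟩

lemma uA_sq : uA * uA = 0 := by
  apply Subtype.ext
  apply Prod.ext
  · ext t i j
    show (uf t * uf t) i j = (0 : M2) i j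
    fin_cases i <;> fin_cases j <;>
      simp [uf, Matrix.mul_apply, Fin.sum_univ_two]
  · show ((0:ℂ)*0, ((0:ℂ)*0, (0:ℂ)*0)) = (0, (0, 0))
    norm_num

lemma key : vA * vA * vA + (3:ℂ) • (vA * vA) + (2:ℂ) • vA = uA * star uA := by
  apply Subtype.ext
  apply Prod.ext
  · ext t i j
    show (vf t * vf t * vf t + (3:ℂ) • (vf t * vf t) + (2:ℂ) • vf t) i j
        = (uf t * star (uf t)) i j
    have hs : ((sq' t : ℂ))^2 = ((t:ℝ):ℂ) * (1 - ((t:ℝ):ℂ)) * (2 - ((t:ℝ):ℂ)) := by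
      have h := congrArg (Complex.ofReal) (sq'_sq t)
      push_cast at h
      exact h
    fin_cases i <;> fin_cases j <;>
      simp [uf, vf, Matrix.mul_apply, Fin.sum_univ_two, Matrix.diagonal,
        Matrix.star_apply] <;>
      first
        | ring1
        | linear_combination hs
        | linear_combination -hs
        | linear_combination 2 * hs
        | linear_combination -2 * hs
  · show ((-2:ℂ)*(-2)*(-2) + 3*((-2)*(-2)) + 2*(-2),
      ((-1:ℂ)*(-1)*(-1) + 3*((-1)*(-1)) + 2*(-1), ((0:ℂ)*0*0 + 3*(0*0) + 2*0)))
      = ((0:ℂ) * star (0:ℂ), ((0:ℂ) * star (0:ℂ), (0:ℂ) * star (0:ℂ)))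
    norm_num

/-- `δ₁` and `δ₂` are not homotopic: there is no *-homomorphism
`H : A₁ → C([0,1], ℂ)` with `H g 0 = δ₁ g` and `H g 1 = δ₂ g` for all `g`. -/
theorem delta1_not_homotopic_delta2 : ¬ Homotopic δ₁ δ₂ := by
  rintro ⟨H, hH⟩
  set φ : C(I, ℂ) := H vA with hφ
  have hu0 : ∀ t : I, (H uA) t = 0 := by
    intro t
    have h : (0 : C(I,ℂ)) = H uA * H uA := by rw [← map_mul, uA_sq, map_zero]
    have h2 : (H uA) t * (H uA) t = 0 := by
      have := congrArg (fun f : C(I,ℂ) => f t) h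
      simpa using this.symm
    exact mul_self_eq_zero.mp h2
  have hcube : ∀ t : I, φ t * (φ t + 1) * (φ t + 2) = 0 := by
    intro t
    have h := congrArg (fun f : C(I,ℂ) => f t) (congrArg H key)
    simp only [map_add, map_mul, map_smul] at h
    have h' : φ t * φ t * φ t + 3 * (φ t * φ t) + 2 * φ t
        = (H uA) t * (H (star uA)) t := by simpa using h
    rw [hu0 t, zero_mul] at h'
    linear_combination h'
  have hval : ∀ t : I, (φ t).re = 0 ∨ (φ t).re = -1 ∨ (φ t).re = -2 := by
    intro t
    rcases mul_eq_zero.mp (hcube t) with h | h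
    · rcases mul_eq_zero.mp h with h | h
      · left; rw [h]; simp
      · right; left
        have : φ t = -1 := by linear_combination h
        rw [this]; simp
    · right; right
      have : φ t = -2 := by linear_combination h
      rw [this]; simp
  have h0 : (φ 0).re = -2 := by
    have := (hH vA).1
    rw [hφ]
    rw [this]
    norm_num [δ₁, vA]
  have h1 : (φ 1).re = -1 := by
    have := (hH vA).2
    rw [hφ, this]
    norm_num [δ₂, vA]
  -- intermediate value theorem via projIcc
  set g : ℝ → ℝ := fun x => (φ (Set.projIcc 0 1 zero_le_one x)).re with hg
  have hgcont : Continuous g :=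
    Complex.continuous_re.comp (φ.continuous.comp continuous_projIcc)
  have hg0 : g 0 = -2 := by
    rw [hg]; simp only [Set.projIcc_left]; exact h0
  have hg1 : g 1 = -1 := by
    rw [hg]; simp only [Set.projIcc_right]; exact h1
  have hIcc : Set.Icc (g 0) (g 1) ⊆ g '' Set.Icc 0 1 :=
    intermediate_value_Icc (by norm_num : (0:ℝ) ≤ 1) hgcont.continuousOn
  have hmem : (-3/2 : ℝ) ∈ Set.Icc (g 0) (g 1) := by
    rw [hg0, hg1]; norm_num
  obtain ⟨x, -, hx⟩ := hIcc hmem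
  rcases hval (Set.projIcc 0 1 zero_le_one x) with h | h | h <;>
    rw [show (φ (Set.projIcc 0 1 zero_le_one x)).re = g x from rfl, hx] at h <;>
    norm_num at h
end
end

section
/- Let A = A(F₁,F₂,φ₀,φ₁) and B = A(F₁′,F₂′,φ₀′,φ₁′) be unital one-dimensional NCCW complexes, and let φ : A → B be a *-homomorphism. Then φ is homotopic to a *-homomorphism ψ : A → B such that for each endpoint e ∈ {0,1} there exists a *-homomorphism χ_e : F₁ → F₂′ with (the C([0,1],F₂′)-component of ψ(g)) evaluated at e equal to χ_e(π(g)) for all g ∈ A, where π : A → F₁ is the projection (f,a) ↦ a. -/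
/- STATEMENT 16: every *-homomorphism between unital one-dimensional NCCW complexes is
homotopic to one whose endpoint evaluations factor through the finite-dimensional quotient
π : A → F₁. -/

open scoped unitInterval
set_option synthInstance.maxHeartbeats 400000
set_option maxHeartbeats 1000000
noncomputable section

instance instCSCM {α β : Type*} [TopologicalSpace α] [TopologicalSpace β] [Star β]
    [ContinuousStar β] : ContinuousStar C(α, β) where
  continuous_star := by
    have h : (star : C(α,β) → C(α,β)) =
        fun f => ContinuousMap.comp ⟨star, continuous_star⟩ f := rfl
    rw [h]; exact ContinuousMap.continuous_postcomp _

instance instTRS {X : Type*} [TopologicalSpace X] [Ring X] [IsTopologicalRing X] [StarRing X]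
    [Algebra ℂ X] [StarModule ℂ X] (S : StarSubalgebra ℂ X) : IsTopologicalRing S :=
  { (inferInstance : IsTopologicalSemiring S) with
    continuous_neg := continuous_induced_rng.2 continuous_subtype_val.neg }

instance instCSS {X : Type*} [TopologicalSpace X] [Ring X] [StarRing X] [ContinuousStar X]
    [Algebra ℂ X] [StarModule ℂ X] (S : StarSubalgebra ℂ X) : ContinuousStar S :=
  ⟨continuous_induced_rng.2 (continuous_star.comp continuous_subtype_val)⟩

variable {F₁ F₂ F₁' F₂' : Type*} [CStarAlgebra F₁] [CStarAlgebra F₂]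
  [CStarAlgebra F₁'] [CStarAlgebra F₂']
variable [FiniteDimensional ℂ F₁] [FiniteDimensional ℂ F₂]
  [FiniteDimensional ℂ F₁'] [FiniteDimensional ℂ F₂']

/-- The Elliott–Thomsen algebra (one-dimensional NCCW complex)
`A(F₁,F₂,φ₀,φ₁) = {(f,a) ∈ C([0,1],F₂) × F₁ : f 0 = φ₀ a, f 1 = φ₁ a}`. -/
def ET (φ₀ φ₁ : F₁ →⋆ₐ[ℂ] F₂) : StarSubalgebra ℂ (C(I, F₂) × F₁) where
  carrier := {x | x.1 0 = φ₀ x.2 ∧ x.1 1 = φ₁ x.2}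
  mul_mem' := by
    rintro x y ⟨hx0, hx1⟩ ⟨hy0, hy1⟩
    constructor
    · show (x.1 * y.1) 0 = φ₀ (x.2 * y.2)
      rw [ContinuousMap.mul_apply, map_mul, hx0, hy0]
    · show (x.1 * y.1) 1 = φ₁ (x.2 * y.2)
      rw [ContinuousMap.mul_apply, map_mul, hx1, hy1]
  add_mem' := by
    rintro x y ⟨hx0, hx1⟩ ⟨hy0, hy1⟩
    constructor
    · show (x.1 + y.1) 0 = φ₀ (x.2 + y.2)
      rw [ContinuousMap.add_apply, map_add, hx0, hy0]
    · show (x.1 + y.1) 1 = φ₁ (x.2 + y.2)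
      rw [ContinuousMap.add_apply, map_add, hx1, hy1]
  algebraMap_mem' := by
    intro r
    constructor
    · show algebraMap ℂ F₂ r = φ₀ (algebraMap ℂ F₁ r)
      exact (AlgHomClass.commutes φ₀ r).symm
    · show algebraMap ℂ F₂ r = φ₁ (algebraMap ℂ F₁ r)
      exact (AlgHomClass.commutes φ₁ r).symm
  star_mem' := by
    rintro x ⟨hx0, hx1⟩
    constructor
    · show star (x.1 0) = φ₀ (star x.2)
      rw [hx0, map_star]
    · show star (x.1 1) = φ₁ (star x.2)
      rw [hx1, map_star]

namespace ETAux
set_option linter.unusedSectionVars false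
set_option linter.deprecated false

open ContinuousMap

variable {F₁ F₂ F₁' F₂' : Type*} [CStarAlgebra F₁] [CStarAlgebra F₂]
  [CStarAlgebra F₁'] [CStarAlgebra F₂']
variable [FiniteDimensional ℂ F₁] [FiniteDimensional ℂ F₂]
  [FiniteDimensional ℂ F₁'] [FiniteDimensional ℂ F₂']
variable (φ₀ φ₁ : F₁ →⋆ₐ[ℂ] F₂)

lemma mem0 (g : ET φ₀ φ₁) : g.1.1 0 = φ₀ g.1.2 := g.2.1
lemma mem1 (g : ET φ₀ φ₁) : g.1.1 1 = φ₁ g.1.2 := g.2.2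

lemma ET_isClosed : IsClosed ((ET φ₀ φ₁ : Set (C(I, F₂) × F₁))) := by
  have h0 : IsClosed {x : C(I, F₂) × F₁ | x.1 0 = φ₀ x.2} :=
    isClosed_eq ((continuous_eval_const 0).comp continuous_fst)
      ((φ₀.toAlgHom.toLinearMap.continuous_of_finiteDimensional).comp continuous_snd)
  have h1 : IsClosed {x : C(I, F₂) × F₁ | x.1 1 = φ₁ x.2} :=
    isClosed_eq ((continuous_eval_const 1).comp continuous_fst)
      ((φ₁.toAlgHom.toLinearMap.continuous_of_finiteDimensional).comp continuous_snd)
  exact h0.inter h1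

noncomputable def cstarA : CStarAlgebra (ET φ₀ φ₁) :=
  letI := ET_isClosed φ₀ φ₁; StarSubalgebra.cstarAlgebra (ET φ₀ φ₁)

/-- second-coordinate projection as a star hom -/
def prj : ET φ₀ φ₁ →⋆ₙₐ[ℂ] F₁ where
  toFun x := x.1.2
  map_smul' _ _ := rfl
  map_zero' := rfl
  map_add' _ _ := rfl
  map_mul' _ _ := rfl
  map_star' _ := rfl

variable {φ₀' φ₁' : F₁' →⋆ₐ[ℂ] F₂'}

lemma beta_norm_le (φ : ET φ₀ φ₁ →⋆ₙₐ[ℂ] ET φ₀' φ₁') (g : ET φ₀ φ₁) :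
    ‖(φ g).1.2‖ ≤ ‖(g : C(I, F₂) × F₁)‖ := by
  letI := cstarA φ₀ φ₁
  letI := cstarA φ₀' φ₁'
  calc ‖(φ g).1.2‖ ≤ ‖((φ g : C(I, F₂') × F₁'))‖ := norm_snd_le _
    _ = ‖φ g‖ := rfl
    _ ≤ ‖g‖ := NonUnitalStarAlgHom.norm_apply_le φ g
    _ = ‖(g : C(I, F₂) × F₁)‖ := rfl

end ETAux
namespace ETAux
section Cut
variable {F₁ F₂ F₁' F₂' : Type*} [CStarAlgebra F₁] [CStarAlgebra F₂]
  [CStarAlgebra F₁'] [CStarAlgebra F₂']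
variable [FiniteDimensional ℂ F₁] [FiniteDimensional ℂ F₂]
  [FiniteDimensional ℂ F₁'] [FiniteDimensional ℂ F₂']
variable (φ₀ φ₁ : F₁ →⋆ₐ[ℂ] F₂) (φ₀' φ₁' : F₁' →⋆ₐ[ℂ] F₂')

set_option maxHeartbeats 8000000 in
theorem exists_cut (φ : ET φ₀ φ₁ →⋆ₙₐ[ℂ] ET φ₀' φ₁') :
    ∃ c : ℝ, 0 < c ∧ c < 1 ∧ ∀ g : ET φ₀ φ₁, g.1.2 = 0 →
      (∀ t : I, (t : ℝ) ≤ c → g.1.1 t = 0) → (φ g).1.2 = 0 := by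
  classical
  set β : ET φ₀ φ₁ →⋆ₙₐ[ℂ] F₁' := (prj φ₀' φ₁').comp φ with hβdef
  have hβ_apply : ∀ g, β g = (φ g).1.2 := fun g => rfl
  set Q : I → Prop := fun t => ∀ ε : ℝ, 0 < ε →
    ∃ g : ET φ₀ φ₁, g.1.2 = 0 ∧ (∀ r : I, ε ≤ |(r : ℝ) - (t : ℝ)| → g.1.1 r = 0) ∧ β g ≠ 0
    with hQdef
  -- Step A : the set of "support points" is finite
  have hSfin : {t : I | Q t}.Finite := by
    by_contra hinf
    have hinf : Set.Infinite {t : I | Q t} := hinf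
    set n : ℕ := Module.finrank ℂ F₁' + 2 with hn
    have emb := hinf.natEmbedding
    set u : Fin n → I := fun i => (emb (i : ℕ) : I) with hu
    have huQ : ∀ i, Q (u i) := fun i => (emb (i : ℕ)).2
    have huinj : Function.Injective u := by
      intro i j hij
      have := emb.injective (Subtype.ext hij)
      omega
    -- minimal gap
    set P : Finset (Fin n × Fin n) := Finset.univ.filter (fun p => p.1 ≠ p.2) with hP
    have hPne : P.Nonempty := by
      refine ⟨(⟨0, by omega⟩, ⟨1, by omega⟩), ?_⟩
      simp [hP, Fin.ext_iff]
      omega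
    set m : ℝ := (P.image (fun p => |(u p.1 : ℝ) - (u p.2 : ℝ)|)).min' (hPne.image _) with hm
    have hm_pos : 0 < m := by
      have hmem := Finset.min'_mem (P.image (fun p => |(u p.1 : ℝ) - (u p.2 : ℝ)|))
        (hPne.image _)
      obtain ⟨p, hp, hpm⟩ := Finset.mem_image.mp hmem
      rw [hm, ← hpm]
      have h1 : u p.1 ≠ u p.2 := fun h =>
        (Finset.mem_filter.mp hp).2 (huinj h)
      have h2 : (u p.1 : ℝ) ≠ (u p.2 : ℝ) := fun h => h1 (Subtype.ext h)
      exact abs_pos.mpr (sub_ne_zero.mpr h2)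
    have hm_le : ∀ i j, i ≠ j → m ≤ |(u i : ℝ) - (u j : ℝ)| := by
      intro i j hij
      apply Finset.min'_le
      have hmem2 : (i, j) ∈ P := by
        rw [hP, Finset.mem_filter]
        exact ⟨Finset.mem_univ _, hij⟩
      exact Finset.mem_image_of_mem _ hmem2
    -- pick witnesses
    choose g hg2 hgvan hgne using (fun i : Fin n => huQ i (m / 2) (half_pos hm_pos))
    set x : Fin n → F₁' := fun i => star (β (g i)) * β (g i) with hx
    have hxs : ∀ i, x i = β (star (g i) * g i) := fun i => by
      rw [map_mul, map_star]
    have hdisj : ∀ i j, i ≠ j → (star (g i) * g i) * (star (g j) * g j) = 0 := by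
      intro i j hij
      apply Subtype.ext
      apply Prod.ext
      · apply ContinuousMap.ext; intro r
        show (star ((g i).1.1) * (g i).1.1 * (star ((g j).1.1) * (g j).1.1)) r = 0
        simp only [ContinuousMap.mul_apply, ContinuousMap.star_apply,
          ContinuousMap.zero_apply]
        by_cases hri : m / 2 ≤ |(r : ℝ) - (u i : ℝ)|
        · rw [hgvan i r hri]; simp
        · have hrj : m / 2 ≤ |(r : ℝ) - (u j : ℝ)| := by
            push_neg at hri
            have h1 := hm_le i j hij
            have h2 : |(u i : ℝ) - (u j : ℝ)| ≤ |(u i : ℝ) - (r : ℝ)| + |(r : ℝ) - (u j : ℝ)| :=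
              abs_sub_le _ _ _
            rw [abs_sub_comm (u i : ℝ) (r : ℝ)] at h2
            linarith
          rw [hgvan j r hrj]; simp
      · show (star ((g i).1.2) * (g i).1.2 * (star ((g j).1.2) * (g j).1.2)) = 0
        rw [hg2 i]; simp
    have hxmul : ∀ i j, i ≠ j → x i * x j = 0 := by
      intro i j hij
      rw [hxs, hxs, ← map_mul, hdisj i j hij, map_zero]
    have hxne : ∀ i, x i ≠ 0 := by
      intro i hxi
      apply hgne i
      have h2 : ‖β (g i)‖ * ‖β (g i)‖ = 0 := by
        rw [← CStarRing.norm_star_mul_self]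
        show ‖x i‖ = 0
        rw [hxi, norm_zero]
      exact norm_eq_zero.mp (mul_self_eq_zero.mp h2)
    have hxstar : ∀ i, star (x i) = x i := fun i => by
      simp [hx, star_mul, mul_assoc]
    have hxsq : ∀ i, x i * x i ≠ 0 := by
      intro i h
      apply hxne i
      have h2 : ‖x i‖ * ‖x i‖ = 0 := by
        rw [← CStarRing.norm_star_mul_self, hxstar, h, norm_zero]
      exact norm_eq_zero.mp (mul_self_eq_zero.mp h2)
    have hind : LinearIndependent ℂ x := by
      rw [Fintype.linearIndependent_iff]
      intro cf hsum j
      have h0 : x j * ∑ i, cf i • x i = 0 := by rw [hsum, mul_zero]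
      rw [Finset.mul_sum] at h0
      rw [Finset.sum_eq_single j
        (fun i _ hij => by rw [mul_smul_comm, hxmul j i (Ne.symm hij), smul_zero])
        (fun h => absurd (Finset.mem_univ j) h)] at h0
      rw [mul_smul_comm] at h0
      rcases smul_eq_zero.mp h0 with h | h
      · exact h
      · exact absurd h (hxsq j)
    have hcard := hind.fintype_card_le_finrank
    rw [Fintype.card_fin] at hcard
    omega
  -- Step B : choose the cut point c
  set Sf : Finset I := hSfin.toFinset with hSf
  set K : Finset ℝ :=
    insert (1 / 2 : ℝ) ((Sf.filter (fun t : I => (t : ℝ) < 1)).image (fun t : I => (t : ℝ))) with hK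
  have hKne : K.Nonempty := Finset.insert_nonempty _ _
  set M : ℝ := K.max' hKne with hM
  have hM1 : M < 1 := by
    rw [hM, Finset.max'_lt_iff]
    intro y hy
    rcases Finset.mem_insert.mp hy with h | h
    · rw [h]; norm_num
    · obtain ⟨t, ht, rfl⟩ := Finset.mem_image.mp h
      exact (Finset.mem_filter.mp ht).2
  have hMhalf : (1 / 2 : ℝ) ≤ M := Finset.le_max' _ _ (Finset.mem_insert_self _ _)
  set c : ℝ := (M + 1) / 2 with hc
  have hc0 : 0 < c := by rw [hc]; linarith
  have hc1 : c < 1 := by rw [hc]; linarith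
  have hnQ : ∀ t : I, c ≤ (t : ℝ) → (t : ℝ) < 1 → ¬ Q t := by
    intro t hct ht1 hQt
    have hmem : (t : ℝ) ∈ K := Finset.mem_insert_of_mem
      (Finset.mem_image_of_mem _ (Finset.mem_filter.mpr ⟨hSfin.mem_toFinset.mpr hQt, ht1⟩))
    have := Finset.le_max' K _ hmem
    rw [← hM] at this
    rw [hc] at hct
    linarith
  refine ⟨c, hc0, hc1, ?_⟩
  intro gg hg2 hgvan
  rw [← hβ_apply]
  -- Step C : show β gg = 0
  have key : ∀ ε : ℝ, 0 < ε → ‖β gg‖ ≤ ε := by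
    intro ε hε
    set v : C(I, F₂) := gg.1.1 with hv
    have hg1 : v 1 = 0 := by rw [hv, mem1, hg2, map_zero]
    have hg0 : v 0 = 0 := by rw [hv, mem0, hg2, map_zero]
    have hcont := (map_continuous v).continuousAt (x := (1 : I))
    rw [Metric.continuousAt_iff] at hcont
    obtain ⟨δ', hδ'pos, hδ'⟩ := hcont ε hε
    set δ : ℝ := min δ' (1 - c) with hδdef
    have hδpos : 0 < δ := lt_min hδ'pos (by linarith)
    have hδle : δ ≤ 1 - c := min_le_right _ _
    have hδle' : δ ≤ δ' := min_le_left _ _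
    -- cutoff
    set w : I → ℝ := fun r => min 1 (max 0 ((1 - δ / 2 - (r : ℝ)) * (2 / δ))) with hw
    have hw_cont : Continuous w := by
      apply continuous_const.min
      apply continuous_const.max
      exact (continuous_const.sub continuous_subtype_val).mul continuous_const
    have hw0 : ∀ r, 0 ≤ w r := fun r => le_min zero_le_one (le_max_left _ _)
    have hw1 : ∀ r, w r ≤ 1 := fun r => min_le_left _ _
    have hw_one : ∀ r : I, (r : ℝ) ≤ 1 - δ → w r = 1 := by
      intro r hr
      have h1 : (1 : ℝ) ≤ (1 - δ / 2 - (r : ℝ)) * (2 / δ) := by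
        have h2 : δ / 2 ≤ 1 - δ / 2 - (r : ℝ) := by linarith
        calc (1 : ℝ) = (δ / 2) * (2 / δ) := by field_simp
          _ ≤ (1 - δ / 2 - (r : ℝ)) * (2 / δ) :=
            mul_le_mul_of_nonneg_right h2 (by positivity)
      exact min_eq_left (le_trans h1 (le_max_right _ _))
    have hw_zero : ∀ r : I, 1 - δ / 2 ≤ (r : ℝ) → w r = 0 := by
      intro r hr
      have h1 : (1 - δ / 2 - (r : ℝ)) * (2 / δ) ≤ 0 :=
        mul_nonpos_of_nonpos_of_nonneg (by linarith) (by positivity)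
      rw [hw]
      simp only []
      rw [max_eq_left h1]
      exact min_eq_right zero_le_one
    -- split gg = g1 + g2
    set g1f : C(I, F₂) := ⟨fun r => ((w r : ℝ) : ℂ) • v r,
      (Complex.continuous_ofReal.comp hw_cont).smul (map_continuous v)⟩ with hg1f
    set g2f : C(I, F₂) := ⟨fun r => ((1 : ℂ) - ((w r : ℝ) : ℂ)) • v r,
      (continuous_const.sub (Complex.continuous_ofReal.comp hw_cont)).smul
        (map_continuous v)⟩ with hg2f
    have hg1f0 : g1f 0 = 0 := by
      show ((w 0 : ℝ) : ℂ) • v 0 = 0; rw [hg0, smul_zero]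
    have hg1f1 : g1f 1 = 0 := by
      show ((w 1 : ℝ) : ℂ) • v 1 = 0; rw [hg1, smul_zero]
    set g1 : ET φ₀ φ₁ := ⟨(g1f, 0), by
      constructor
      · show g1f 0 = φ₀ 0; rw [hg1f0, map_zero]
      · show g1f 1 = φ₁ 0; rw [hg1f1, map_zero]⟩ with hg1e
    set g2 : ET φ₀ φ₁ := ⟨(g2f, 0), by
      constructor
      · show ((1 : ℂ) - ((w 0 : ℝ) : ℂ)) • v 0 = φ₀ 0; rw [hg0, smul_zero, map_zero]
      · show ((1 : ℂ) - ((w 1 : ℝ) : ℂ)) • v 1 = φ₁ 0; rw [hg1, smul_zero, map_zero]⟩ with hg2e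
    have hsplit : gg = g1 + g2 := by
      apply Subtype.ext
      apply Prod.ext
      · apply ContinuousMap.ext; intro r
        show v r = ((w r : ℝ) : ℂ) • v r + ((1 : ℂ) - ((w r : ℝ) : ℂ)) • v r
        rw [← add_smul]
        have : ((w r : ℝ) : ℂ) + ((1 : ℂ) - ((w r : ℝ) : ℂ)) = 1 := by ring
        rw [this, one_smul]
      · show gg.1.2 = 0 + 0
        rw [hg2, add_zero]
    -- the middle piece dies
    have hkill : β g1 = 0 := by
      set K₀ : Set I := {r : I | c ≤ (r : ℝ) ∧ (r : ℝ) ≤ 1 - δ / 2} with hK₀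
      have hK₀closed : IsClosed K₀ :=
        (isClosed_le continuous_const continuous_subtype_val).inter
          (isClosed_le continuous_subtype_val continuous_const)
      have hK₀cpt : IsCompact K₀ := hK₀closed.isCompact
      have hEx : ∀ t : I, t ∈ K₀ → ∃ η : ℝ, 0 < η ∧ ∀ g' : ET φ₀ φ₁, g'.1.2 = 0 →
          (∀ r : I, η ≤ |(r : ℝ) - (t : ℝ)| → g'.1.1 r = 0) → β g' = 0 := by
        intro t ht
        have hnq := hnQ t ht.1 (by have := ht.2; linarith)
        simp only [hQdef] at hnq
        push_neg at hnq
        obtain ⟨η, hη, h⟩ := hnq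
        exact ⟨η, hη, h⟩
      choose! E hEpos hEkill using hEx
      obtain ⟨T, hTmem, hTcov⟩ := hK₀cpt.elim_nhds_subcover
        (fun t => Metric.ball t (E t)) (fun t ht => Metric.ball_mem_nhds t (hEpos t ht))
      set G : I → I → ℝ := fun t r => max 0 (E t - |(r : ℝ) - (t : ℝ)|) with hG
      set G0 : I → ℝ := fun r => max 0 (c - (r : ℝ)) + max 0 ((r : ℝ) - (1 - δ / 2)) with hG0
      set D : I → ℝ := fun r => G0 r + ∑ t ∈ T, G t r with hD
      have hGcont : ∀ t, Continuous (G t) := fun t =>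
        continuous_const.max (continuous_const.sub
          ((continuous_subtype_val.sub continuous_const).abs))
      have hG0cont : Continuous G0 :=
        (continuous_const.max (continuous_const.sub continuous_subtype_val)).add
          (continuous_const.max (continuous_subtype_val.sub continuous_const))
      have hDcont : Continuous D :=
        hG0cont.add (continuous_finset_sum _ (fun t _ => hGcont t))
      have hGnn : ∀ t r, 0 ≤ G t r := fun t r => le_max_left _ _
      have hG0nn : ∀ r, 0 ≤ G0 r := fun r => add_nonneg (le_max_left _ _) (le_max_left _ _)
      have hDpos : ∀ r, 0 < D r := by
        intro r
        by_cases hr : r ∈ K₀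
        · obtain ⟨t, ht, hrt⟩ := Set.mem_iUnion₂.mp (hTcov hr)
          have h1 : 0 < G t r := by
            rw [Metric.mem_ball, Subtype.dist_eq, Real.dist_eq] at hrt
            exact lt_max_of_lt_right (by linarith)
          have h2 : G t r ≤ ∑ t' ∈ T, G t' r :=
            Finset.single_le_sum (fun t' _ => hGnn t' r) ht
          have := hG0nn r
          rw [hD]; dsimp only; linarith
        · have h1 : 0 < G0 r := by
            rw [hK₀, Set.mem_setOf_eq, not_and_or] at hr
            rcases hr with h | h
            · push_neg at h
              exact lt_add_of_lt_of_nonneg (lt_max_of_lt_right (by linarith)) (le_max_left _ _)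
            · push_neg at h
              exact lt_add_of_nonneg_of_lt (le_max_left _ _) (lt_max_of_lt_right (by linarith))
          have h2 : 0 ≤ ∑ t' ∈ T, G t' r := Finset.sum_nonneg (fun t' _ => hGnn t' r)
          rw [hD]; dsimp only; linarith
      set piece : I → ET φ₀ φ₁ := fun t =>
        ⟨(⟨fun r => ((G t r / D r : ℝ) : ℂ) • g1f r,
          (Complex.continuous_ofReal.comp ((hGcont t).div hDcont
            (fun r => (hDpos r).ne'))).smul (map_continuous g1f)⟩, 0), by
          constructor
          · show ((G t 0 / D 0 : ℝ) : ℂ) • g1f 0 = φ₀ 0; rw [hg1f0, smul_zero, map_zero]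
          · show ((G t 1 / D 1 : ℝ) : ℂ) • g1f 1 = φ₁ 0; rw [hg1f1, smul_zero, map_zero]⟩ with hpiece
      have hsum : g1 = ∑ t ∈ T, piece t := by
        apply Subtype.ext
        rw [AddSubmonoidClass.coe_finset_sum]
        apply Prod.ext
        · rw [Prod.fst_sum]
          apply ContinuousMap.ext; intro r
          rw [ContinuousMap.sum_apply]
          show g1f r = ∑ t ∈ T, ((G t r / D r : ℝ) : ℂ) • g1f r
          rw [← Finset.sum_smul]
          have hcoef : (∑ t ∈ T, ((G t r / D r : ℝ) : ℂ)) =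
              (((∑ t ∈ T, G t r) / D r : ℝ) : ℂ) := by
            push_cast [Finset.sum_div]
            rfl
          rw [hcoef]
          by_cases hr : r ∈ K₀
          · have hG0r : G0 r = 0 := by
              rw [hG0]
              have h1 : c - (r : ℝ) ≤ 0 := by have := hr.1; linarith
              have h2 : (r : ℝ) - (1 - δ / 2) ≤ 0 := by have := hr.2; linarith
              dsimp only
              rw [max_eq_left h1, max_eq_left h2, add_zero]
            have hsumD : (∑ t ∈ T, G t r) = D r := by
              rw [hD]; dsimp only; rw [hG0r, zero_add]
            rw [hsumD, div_self (hDpos r).ne']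
            norm_num
          · have hzero : g1f r = 0 := by
              rw [hK₀, Set.mem_setOf_eq, not_and_or] at hr
              rcases hr with h | h
              · push_neg at h
                show ((w r : ℝ) : ℂ) • v r = 0
                rw [hgvan r (le_of_lt h), smul_zero]
              · push_neg at h
                show ((w r : ℝ) : ℂ) • v r = 0
                rw [hw_zero r (le_of_lt h)]
                norm_num
            rw [hzero, smul_zero]
        · rw [Prod.snd_sum]
          show (0 : F₁) = ∑ _t ∈ T, (0 : F₁)
          rw [Finset.sum_const, smul_zero]
      rw [hsum, map_sum]
      apply Finset.sum_eq_zero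
      intro t ht
      apply hEkill t (hTmem t ht) (piece t) rfl
      intro r hr
      show ((G t r / D r : ℝ) : ℂ) • g1f r = 0
      have hGz : G t r = 0 := max_eq_left (by linarith)
      rw [hGz]
      norm_num
    -- the tail piece is small
    have hb : ‖β g2‖ ≤ ε := by
      have h1 := beta_norm_le φ₀ φ₁ φ g2
      rw [← hβ_apply] at h1
      refine le_trans h1 ?_
      have : ‖(g2 : C(I, F₂) × F₁)‖ = max ‖g2f‖ ‖(0 : F₁)‖ := rfl
      rw [this, norm_zero]
      apply max_le _ (le_of_lt hε)
      rw [ContinuousMap.norm_le _ (le_of_lt hε)]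
      intro r
      show ‖((1 : ℂ) - ((w r : ℝ) : ℂ)) • v r‖ ≤ ε
      by_cases hr : (r : ℝ) ≤ 1 - δ
      · rw [hw_one r hr]; norm_num; exact le_of_lt hε
      · push_neg at hr
        have hdist : dist r (1 : I) < δ' := by
          rw [Subtype.dist_eq, Real.dist_eq]
          show |(r : ℝ) - 1| < δ'
          rw [abs_of_nonpos (by linarith [r.2.2] : (r : ℝ) - 1 ≤ 0)]
          have := r.2.2
          linarith
        have h2 := hδ' hdist
        rw [hg1, dist_zero_right] at h2
        calc ‖((1 : ℂ) - ((w r : ℝ) : ℂ)) • v r‖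
            = ‖(1 : ℂ) - ((w r : ℝ) : ℂ)‖ * ‖v r‖ := norm_smul _ _
          _ ≤ 1 * ε := by
              apply mul_le_mul _ (le_of_lt h2) (norm_nonneg _) zero_le_one
              have : (1 : ℂ) - ((w r : ℝ) : ℂ) = (((1 - w r : ℝ)) : ℂ) := by push_cast; ring
              rw [this, Complex.norm_real]
              rw [Real.norm_eq_abs, abs_of_nonneg (by linarith [hw1 r])]
              linarith [hw0 r]
          _ = ε := one_mul ε
    rw [hsplit, map_add, hkill, zero_add]
    exact hb
  have h0 : ‖β gg‖ ≤ 0 := le_of_forall_pos_le_add (fun ε hε => by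
    simpa using key ε hε)
  exact norm_le_zero_iff.mp h0

end Cut
end ETAux
namespace ETAux
section Cons
set_option linter.unusedSectionVars false
variable {F₁ F₂ F₁' F₂' : Type*} [CStarAlgebra F₁] [CStarAlgebra F₂]
  [CStarAlgebra F₁'] [CStarAlgebra F₂']
variable [FiniteDimensional ℂ F₁] [FiniteDimensional ℂ F₂]
  [FiniteDimensional ℂ F₁'] [FiniteDimensional ℂ F₂']
variable (φ₀ φ₁ : F₁ →⋆ₐ[ℂ] F₂)
variable (c : ℝ)

/-- the squeezing homotopy of the unit interval -/
def sigCM (hc0 : 0 < c) (hc1 : c < 1) : C(I × I, I) where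
  toFun p := ⟨(1 - (p.1 : ℝ)) * (p.2 : ℝ) + (p.1 : ℝ) * max 0 (((p.2 : ℝ) - c) / (1 - c)), by
    have hs0 := p.1.2.1
    have hs1 := p.1.2.2
    have ht0 := p.2.2.1
    have ht1 := p.2.2.2
    have hm0 : (0 : ℝ) ≤ max 0 (((p.2 : ℝ) - c) / (1 - c)) := le_max_left _ _
    have hm1 : max 0 (((p.2 : ℝ) - c) / (1 - c)) ≤ 1 := by
      apply max_le zero_le_one
      rw [div_le_one (by linarith)]
      linarith
    constructor
    · have h1 : (0 : ℝ) ≤ (1 - (p.1 : ℝ)) * (p.2 : ℝ) :=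
        mul_nonneg (by linarith) (by linarith)
      have h2 : (0 : ℝ) ≤ (p.1 : ℝ) * max 0 (((p.2 : ℝ) - c) / (1 - c)) :=
        mul_nonneg (by linarith) hm0
      linarith
    · nlinarith⟩
  continuous_toFun := by
    apply Continuous.subtype_mk
    have hs : Continuous fun p : I × I => (p.1 : ℝ) :=
      continuous_subtype_val.comp continuous_fst
    have ht : Continuous fun p : I × I => (p.2 : ℝ) :=
      continuous_subtype_val.comp continuous_snd
    exact ((continuous_const.sub hs).mul ht).add
      (hs.mul (continuous_const.max ((ht.sub continuous_const).div_const _)))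

variable {c}
variable (hc0 : 0 < c) (hc1 : c < 1)

lemma sig_zero (s : I) : sigCM c hc0 hc1 (s, 0) = 0 := by
  apply Subtype.ext
  show (1 - (s : ℝ)) * ((0 : I) : ℝ) + (s : ℝ) * max 0 ((((0 : I) : ℝ) - c) / (1 - c)) = 0
  have h0 : ((0 : I) : ℝ) = 0 := rfl
  rw [h0]
  have h1 : ((0 : ℝ) - c) / (1 - c) ≤ 0 :=
    div_nonpos_iff.mpr (Or.inr ⟨by linarith, by linarith⟩)
  rw [max_eq_left h1]
  ring

lemma sig_one (s : I) : sigCM c hc0 hc1 (s, 1) = 1 := by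
  apply Subtype.ext
  show (1 - (s : ℝ)) * ((1 : I) : ℝ) + (s : ℝ) * max 0 ((((1 : I) : ℝ) - c) / (1 - c)) = 1
  have h0 : ((1 : I) : ℝ) = 1 := rfl
  rw [h0]
  rw [div_self (by linarith : (1 : ℝ) - c ≠ 0)]
  rw [max_eq_right zero_le_one]
  ring

lemma sig_id (t : I) : sigCM c hc0 hc1 (0, t) = t := by
  apply Subtype.ext
  show (1 - ((0 : I) : ℝ)) * (t : ℝ) + ((0 : I) : ℝ) * max 0 (((t : ℝ) - c) / (1 - c)) = (t : ℝ)
  have h0 : ((0 : I) : ℝ) = 0 := rfl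
  rw [h0]
  ring

lemma sig_collapse (t : I) (ht : (t : ℝ) ≤ c) : sigCM c hc0 hc1 (1, t) = 0 := by
  apply Subtype.ext
  show (1 - ((1 : I) : ℝ)) * (t : ℝ) + ((1 : I) : ℝ) * max 0 (((t : ℝ) - c) / (1 - c)) = 0
  have h0 : ((1 : I) : ℝ) = 1 := rfl
  rw [h0]
  have h1 : ((t : ℝ) - c) / (1 - c) ≤ 0 :=
    div_nonpos_iff.mpr (Or.inr ⟨by linarith, by linarith⟩)
  rw [max_eq_left h1]
  ring

/-- precomposition with the squeezing map, as a star homomorphism of `ET φ₀ φ₁` -/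
def Lam (s : I) : ET φ₀ φ₁ →⋆ₙₐ[ℂ] ET φ₀ φ₁ where
  toFun g := ⟨(g.1.1.comp ((sigCM c hc0 hc1).curry s), g.1.2), by
    constructor
    · show g.1.1 ((sigCM c hc0 hc1).curry s 0) = φ₀ g.1.2
      rw [ContinuousMap.curry_apply, sig_zero hc0 hc1]
      exact mem0 φ₀ φ₁ g
    · show g.1.1 ((sigCM c hc0 hc1).curry s 1) = φ₁ g.1.2
      rw [ContinuousMap.curry_apply, sig_one hc0 hc1]
      exact mem1 φ₀ φ₁ g⟩
  map_smul' r g := Subtype.ext (Prod.ext (ContinuousMap.ext fun _ => rfl) rfl)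
  map_zero' := Subtype.ext (Prod.ext (ContinuousMap.ext fun _ => rfl) rfl)
  map_add' g g' := Subtype.ext (Prod.ext (ContinuousMap.ext fun _ => rfl) rfl)
  map_mul' g g' := Subtype.ext (Prod.ext (ContinuousMap.ext fun _ => rfl) rfl)
  map_star' g := Subtype.ext (Prod.ext (ContinuousMap.ext fun _ => rfl) rfl)

/-- a canonical element of `ET φ₀ φ₁` with prescribed `F₁`-component -/
def lin (a : F₁) : ET φ₀ φ₁ :=
  ⟨(⟨fun t => ((1 - (t : ℝ) : ℝ) : ℂ) • φ₀ a + (((t : ℝ) : ℝ) : ℂ) • φ₁ a,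
    (Continuous.smul (Complex.continuous_ofReal.comp
      (continuous_const.sub continuous_subtype_val)) continuous_const).add
      (Continuous.smul (Complex.continuous_ofReal.comp continuous_subtype_val)
        continuous_const)⟩, a), by
    constructor
    · show ((1 - ((0 : I) : ℝ) : ℝ) : ℂ) • φ₀ a + ((((0 : I) : ℝ) : ℝ) : ℂ) • φ₁ a = φ₀ a
      have h0 : ((0 : I) : ℝ) = 0 := rfl
      rw [h0]
      norm_num
    · show ((1 - ((1 : I) : ℝ) : ℝ) : ℂ) • φ₀ a + ((((1 : I) : ℝ) : ℝ) : ℂ) • φ₁ a = φ₁ a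
      have h0 : ((1 : I) : ℝ) = 1 := rfl
      rw [h0]
      norm_num⟩

lemma lin_snd (a : F₁) : (lin φ₀ φ₁ a).1.2 = a := rfl

end Cons
end ETAux
set_option maxHeartbeats 4000000 in
/-- Every *-homomorphism `φ : A → B` between unital one-dimensional NCCW complexes is
homotopic to a *-homomorphism `ψ` whose endpoint evaluations factor through
`π : A → F₁`, `(f,a) ↦ a`, via *-homomorphisms `χ₀, χ₁ : F₁ → F₂'`. -/
theorem hom_homotopic_to_hom_with_finite_dimensional_endpoints
    (φ₀ φ₁ : F₁ →⋆ₐ[ℂ] F₂) (φ₀' φ₁' : F₁' →⋆ₐ[ℂ] F₂')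
    (φ : ET φ₀ φ₁ →⋆ₙₐ[ℂ] ET φ₀' φ₁') :
    ∃ ψ : ET φ₀ φ₁ →⋆ₙₐ[ℂ] ET φ₀' φ₁', Homotopic φ ψ ∧
      ∃ χ₀ χ₁ : F₁ →⋆ₙₐ[ℂ] F₂',
        (∀ g : ET φ₀ φ₁, (ψ g).1.1 0 = χ₀ g.1.2) ∧
        (∀ g : ET φ₀ φ₁, (ψ g).1.1 1 = χ₁ g.1.2) := by
  classical
  obtain ⟨c, hc0, hc1, hkill⟩ := ETAux.exists_cut φ₀ φ₁ φ₀' φ₁' φ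
  -- automatic continuity of φ
  have hφcont : Continuous (φ : ET φ₀ φ₁ → ET φ₀' φ₁') := by
    letI := ETAux.cstarA φ₀ φ₁
    letI := ETAux.cstarA φ₀' φ₁'
    exact AddMonoidHomClass.continuous_of_bound φ 1 (fun x => by
      rw [one_mul]; exact NonUnitalStarAlgHom.norm_apply_le φ x)
  set Sg : C(I × I, I) := ETAux.sigCM c hc0 hc1 with hSg
  set L : I → (ET φ₀ φ₁ →⋆ₙₐ[ℂ] ET φ₀ φ₁) := fun s => ETAux.Lam φ₀ φ₁ hc0 hc1 s with hL
  set ψ : ET φ₀ φ₁ →⋆ₙₐ[ℂ] ET φ₀' φ₁' := φ.comp (L 1) with hψ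
  have hLsnd : ∀ s g, ((L s g : ET φ₀ φ₁)).1.2 = g.1.2 := fun s g => rfl
  have hLfst : ∀ s g t, ((L s g : ET φ₀ φ₁)).1.1 t = g.1.1 (Sg.curry s t) := fun s g t => rfl
  -- the homotopy
  have hLcont : ∀ g, Continuous fun s => L s g := by
    intro g
    apply Continuous.subtype_mk
    refine Continuous.prodMk ?_ continuous_const
    exact (ContinuousMap.continuous_postcomp g.1.1).comp (map_continuous Sg.curry)
  have hL0 : ∀ g, L 0 g = g := by
    intro g
    apply Subtype.ext
    apply Prod.ext
    · apply ContinuousMap.ext; intro t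
      show g.1.1 (Sg.curry 0 t) = g.1.1 t
      rw [ContinuousMap.curry_apply, hSg, ETAux.sig_id hc0 hc1]
    · rfl
  -- well-definedness through the second coordinate
  have hW : ∀ g g' : ET φ₀ φ₁, g.1.2 = g'.1.2 →
      (φ (L 1 g)).1.2 = (φ (L 1 g')).1.2 := by
    intro g g' h
    have hdiff : (φ (L 1 g - L 1 g')).1.2 = 0 := by
      apply hkill
      · show (L 1 g).1.2 - (L 1 g').1.2 = 0
        rw [hLsnd, hLsnd, h, sub_self]
      · intro t ht
        show (L 1 g).1.1 t - (L 1 g').1.1 t = 0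
        rw [hLfst, hLfst, ContinuousMap.curry_apply, hSg,
          ETAux.sig_collapse hc0 hc1 t ht, ETAux.mem0 φ₀ φ₁ g, ETAux.mem0 φ₀ φ₁ g', h,
          sub_self]
    rw [map_sub φ] at hdiff
    exact sub_eq_zero.mp hdiff
  -- χ as a function
  set χf : F₁ → F₁' := fun a => (φ (L 1 (ETAux.lin φ₀ φ₁ a))).1.2 with hχf
  have hψχ : ∀ g : ET φ₀ φ₁, (ψ g).1.2 = χf g.1.2 := by
    intro g
    exact hW g (ETAux.lin φ₀ φ₁ g.1.2) rfl
  -- χ as a star homomorphism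
  set χ : F₁ →⋆ₙₐ[ℂ] F₁' :=
    { toFun := χf
      map_smul' := fun r a => by
        have h1 := hW (ETAux.lin φ₀ φ₁ (r • a)) (r • ETAux.lin φ₀ φ₁ a) rfl
        show χf (r • a) = r • χf a
        rw [hχf]
        dsimp only
        rw [h1, map_smul (L 1), map_smul φ]
        rfl
      map_zero' := by
        have h1 := hW (ETAux.lin φ₀ φ₁ 0) (0 : ET φ₀ φ₁) rfl
        show χf 0 = 0
        rw [hχf]
        dsimp only
        rw [h1, map_zero (L 1), map_zero φ]
        rfl
      map_add' := fun a b => by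
        have h1 := hW (ETAux.lin φ₀ φ₁ (a + b))
          (ETAux.lin φ₀ φ₁ a + ETAux.lin φ₀ φ₁ b) rfl
        show χf (a + b) = χf a + χf b
        rw [hχf]
        dsimp only
        rw [h1, map_add (L 1), map_add φ]
        rfl
      map_mul' := fun a b => by
        have h1 := hW (ETAux.lin φ₀ φ₁ (a * b))
          (ETAux.lin φ₀ φ₁ a * ETAux.lin φ₀ φ₁ b) rfl
        show χf (a * b) = χf a * χf b
        rw [hχf]
        dsimp only
        rw [h1, map_mul (L 1), map_mul φ]
        rfl
      map_star' := fun a => by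
        have h1 := hW (ETAux.lin φ₀ φ₁ (star a)) (star (ETAux.lin φ₀ φ₁ a)) rfl
        show χf (star a) = star (χf a)
        rw [hχf]
        dsimp only
        rw [h1, map_star (L 1), map_star φ]
        rfl } with hχ
  refine ⟨ψ, ?_, φ₀'.toNonUnitalStarAlgHom.comp χ, φ₁'.toNonUnitalStarAlgHom.comp χ, ?_, ?_⟩
  · -- the homotopy
    refine ⟨{ toFun := fun g => ⟨fun s => φ (L s g), hφcont.comp (hLcont g)⟩
              map_smul' := fun r g => ContinuousMap.ext fun s => by
                show φ (L s (r • g)) = r • φ (L s g)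
                rw [map_smul (L s), map_smul φ]
              map_zero' := ContinuousMap.ext fun s => by
                show φ (L s 0) = 0
                rw [map_zero (L s), map_zero φ]
              map_add' := fun g g' => ContinuousMap.ext fun s => by
                show φ (L s (g + g')) = φ (L s g) + φ (L s g')
                rw [map_add (L s), map_add φ]
              map_mul' := fun g g' => ContinuousMap.ext fun s => by
                show φ (L s (g * g')) = φ (L s g) * φ (L s g')
                rw [map_mul (L s), map_mul φ]
              map_star' := fun g => ContinuousMap.ext fun s => by
                show φ (L s (star g)) = star (φ (L s g))
                rw [map_star (L s), map_star φ] }, ?_⟩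
    intro x
    constructor
    · show φ (L 0 x) = φ x
      rw [hL0]
    · show φ (L 1 x) = ψ x
      rfl
  · intro g
    have h1 := ETAux.mem0 φ₀' φ₁' (ψ g)
    rw [h1, hψχ g]
    rfl
  · intro g
    have h1 := ETAux.mem1 φ₀' φ₁' (ψ g)
    rw [h1, hψχ g]
    rfl
end
end
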